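/- arXiv:2204.00191 — 3 statements merged into one kernel-verified Lean document; each statement's English description precedes it below -/
import Mathlib

section
/- Let h : [0,1] → ℝ be positive, strictly concave, and subdifferentiable, with supporting-line upper bound ĥ(λ) = min{h(0) + ∂h(0)·λ, h(1) + ∂h(1)·(λ−1)}. Let λ* = (h(1) − h(0) − ∂h(1))/(∂h(0) − ∂h(1)), let τ = ĥ(λ*)/(λ*·h(1) + (1−λ*)·h(0)), and define the affine function h̄(λ) = τ·(h(1) − h(0))·λ + τ·h(0). Then τ ≥ 1 and for all λ ∈ [0,1], (1/τ)·h̄(λ) ≤ h(λ) ≤ h̄(λ). -/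
/-! On `[0, 1]` the function `h` lies above its chord `c` and below the two supporting lines
`h 0 + d0 * x` and `h 1 + d1 * (x - 1)`, which meet at `λ*`. Since `c(λ*) ≤ h(λ*) ≤ ĥ(λ*)`,
`τ ≥ 1`, so `h̄ = τ c` lies above `ĥ` at both endpoints and meets it at the corner `λ*`; being
affine, it then dominates each supporting line on its side of `λ*`. -/

open Set

theorem ConcaveOn.chord_le_of_mem_Icc_zero_one {f : ℝ → ℝ} (hf : ConcaveOn ℝ (Icc 0 1) f)
    {x : ℝ} (hx : x ∈ Icc (0 : ℝ) 1) : (1 - x) * f 0 + x * f 1 ≤ f x := by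
  have h := hf.2 (left_mem_Icc.2 zero_le_one) (right_mem_Icc.2 zero_le_one)
    (sub_nonneg.2 hx.2) hx.1 (sub_add_cancel 1 x)
  simpa using h

theorem add_mul_eq_add_mul_sub_one_of_eq_div {a b d0 d1 t : ℝ} (hd : d1 < d0)
    (ht : t = (b - a - d1) / (d0 - d1)) : a + d0 * t = b + d1 * (t - 1) := by
  rw [eq_div_iff (sub_ne_zero.2 hd.ne')] at ht
  linarith

theorem sub_sub_div_sub_mem_Icc {a b d0 d1 : ℝ} (hd : d1 < d0) (h0 : b ≤ a + d0)
    (h1 : a + d1 ≤ b) : (b - a - d1) / (d0 - d1) ∈ Icc (0 : ℝ) 1 := by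
  have hdd : 0 < d0 - d1 := sub_pos.2 hd
  exact ⟨div_nonneg (by linarith) hdd.le, (div_le_one hdd).2 (by linarith)⟩

theorem add_mul_le_add_mul_of_mem_Icc {p q r s a b x : ℝ} (ha : p + q * a ≤ r + s * a)
    (hb : p + q * b ≤ r + s * b) (hx : x ∈ Icc a b) : p + q * x ≤ r + s * x := by
  obtain ⟨hax, hxb⟩ := hx
  rcases le_total q s with hqs | hsq
  · nlinarith [mul_le_mul_of_nonneg_left hxb (sub_nonneg.2 hqs)]
  · nlinarith [mul_le_mul_of_nonneg_left hax (sub_nonneg.2 hsq)]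

theorem min_add_mul_le_add_mul_of_mem_Icc {a b d0 d1 t p q x : ℝ}
    (hmeet : a + d0 * t = b + d1 * (t - 1)) (h0 : a ≤ p) (ht : a + d0 * t ≤ p + q * t)
    (h1 : b ≤ p + q) (hx : x ∈ Icc (0 : ℝ) 1) :
    min (a + d0 * x) (b + d1 * (x - 1)) ≤ p + q * x := by
  rcases le_total x t with hxt | htx
  · refine (min_le_left _ _).trans (add_mul_le_add_mul_of_mem_Icc ?_ ht ⟨hx.1, hxt⟩)
    simpa using h0
  · have hline : b + d1 * (x - 1) = b - d1 + d1 * x := by ring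
    refine (min_le_right _ _).trans (hline ▸ add_mul_le_add_mul_of_mem_Icc ?_ ?_ ⟨htx, hx.2⟩)
    · linarith
    · linarith

theorem stmt_0 (h : ℝ → ℝ) (d0 d1 : ℝ)
    (hpos : ∀ x ∈ Set.Icc (0:ℝ) 1, 0 < h x)
    (hconc : StrictConcaveOn ℝ (Set.Icc (0:ℝ) 1) h)
    (hsub0 : ∀ x ∈ Set.Icc (0:ℝ) 1, h x ≤ h 0 + d0 * x)
    (hsub1 : ∀ x ∈ Set.Icc (0:ℝ) 1, h x ≤ h 1 + d1 * (x - 1))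
    (hd : d1 < d0) :
    let hhat : ℝ → ℝ := fun x => min (h 0 + d0 * x) (h 1 + d1 * (x - 1))
    let lam : ℝ := (h 1 - h 0 - d1) / (d0 - d1)
    let τ : ℝ := hhat lam / (lam * h 1 + (1 - lam) * h 0)
    let hbar : ℝ → ℝ := fun x => τ * (h 1 - h 0) * x + τ * h 0
    1 ≤ τ ∧ ∀ x ∈ Set.Icc (0:ℝ) 1, (1 / τ) * hbar x ≤ h x ∧ h x ≤ hbar x := by
  intro hhat lam τ hbar
  have h0mem : (0 : ℝ) ∈ Icc (0 : ℝ) 1 := left_mem_Icc.2 zero_le_one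
  have h1mem : (1 : ℝ) ∈ Icc (0 : ℝ) 1 := right_mem_Icc.2 zero_le_one
  have hmeet : h 0 + d0 * lam = h 1 + d1 * (lam - 1) :=
    add_mul_eq_add_mul_sub_one_of_eq_div hd rfl
  have hlam : lam ∈ Icc (0 : ℝ) 1 :=
    sub_sub_div_sub_mem_Icc hd (by simpa using hsub0 1 h1mem) (by simpa using hsub1 0 h0mem)
  have hc : 0 < lam * h 1 + (1 - lam) * h 0 :=
    convex_Ioi (0 : ℝ) (hpos 1 h1mem) (hpos 0 h0mem) hlam.1 (sub_nonneg.2 hlam.2)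
      (add_sub_cancel _ _)
  have hτc : τ * (lam * h 1 + (1 - lam) * h 0) = h 0 + d0 * lam := by
    simp only [τ, hhat, ← hmeet, min_self, div_mul_cancel₀ _ hc.ne']
  have hτ : 1 ≤ τ := by
    refine (le_mul_iff_one_le_left hc).1 (hτc ▸ ?_)
    linarith [hconc.concaveOn.chord_le_of_mem_Icc_zero_one hlam, hsub0 lam hlam]
  have hbar_eq : ∀ x, hbar x = τ * ((1 - x) * h 0 + x * h 1) := fun x => by ring
  refine ⟨hτ, fun x hx => ⟨?_, ?_⟩⟩
  · rw [hbar_eq, one_div, inv_mul_cancel_left₀ (by positivity)]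
    exact hconc.concaveOn.chord_le_of_mem_Icc_zero_one hx
  · have hτ0 : h 0 ≤ τ * h 0 := le_mul_of_one_le_left (hpos 0 h0mem).le hτ
    have hτ1 : h 1 ≤ τ * h 1 := le_mul_of_one_le_left (hpos 1 h1mem).le hτ
    have := min_add_mul_le_add_mul_of_mem_Icc hmeet (p := τ * h 0) (q := τ * (h 1 - h 0))
      hτ0 (by linarith) (by linarith) hx
    calc h x ≤ hhat x := le_min (hsub0 x hx) (hsub1 x hx)
      _ ≤ hbar x := by simp only [hhat, hbar]; linarith
end

section
/- Fix ε ∈ (0, 1/2) and real numbers ℓ₁ ≤ u₁, ℓ₂ ≤ u₂. For λ ∈ [0,1] let (ℓ_λ, u_λ) = (1−λ)(ℓ₁, u₁) + λ(ℓ₂, u₂) and s(λ) = g_ε(ℓ_λ, u_λ) = ∫₀^∞ max{Φ(u_λ − t) − Φ(ℓ_λ + t) − (1 − ε), 0} dt. Then s is differentiable on (0,1) with |s'(λ)| ≤ M·(|u₂ − u₁| + |ℓ₂ − ℓ₁|), where M = max{|u₁|, |u₂|, |ℓ₁|, |ℓ₂|}. -/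
/-!
Along the segment, the integrand `max (Φ(u_λ - t) - Φ(ℓ_λ + t) - (1 - ε)) 0` vanishes for `t > M`,
so near `λ` the function `s` is an integral over the bounded interval `(0, M]`. Since `Φ` is
1-Lipschitz, the integrand is `(|u₂ - u₁| + |ℓ₂ - ℓ₁|)`-Lipschitz in `λ`, and it is differentiable
in `λ` for all `t` but the single zero of the strictly decreasing `t ↦ Φ(u_λ - t) - Φ(ℓ_λ + t)`.
Dominated differentiation under the integral sign then gives `s'(λ)`, an integral over `(0, M]`
of a function bounded by `|u₂ - u₁| + |ℓ₂ - ℓ₁|` because the Gaussian density is at most 1.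
-/

open MeasureTheory Set

/-- The standard Gaussian cumulative distribution function. -/
noncomputable def Phi (x : ℝ) : ℝ :=
  (∫ s in Set.Iic x, Real.exp (-s ^ 2 / 2)) / Real.sqrt (2 * Real.pi)

/-- `g ε ℓ u = ∫₀^∞ max{Φ(u − t) − Φ(ℓ + t) − (1 − ε), 0} dt`. -/
noncomputable def g (ε ℓ u : ℝ) : ℝ :=
  ∫ t in Set.Ioi (0:ℝ), max (Phi (u - t) - Phi (ℓ + t) - (1 - ε)) 0

noncomputable def phi (x : ℝ) : ℝ :=
  Real.exp (-x ^ 2 / 2) / Real.sqrt (2 * Real.pi)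

lemma integrable_exp_neg_sq_div_two : Integrable fun s : ℝ => Real.exp (-s ^ 2 / 2) := by
  convert integrable_exp_neg_mul_sq (b := (1 / 2 : ℝ)) (by norm_num) using 2 with s
  ring_nf

lemma continuous_phi : Continuous phi := by
  unfold phi; fun_prop

lemma phi_pos (x : ℝ) : 0 < phi x := by
  unfold phi; positivity

lemma abs_phi_le_one (x : ℝ) : |phi x| ≤ 1 := by
  rw [abs_of_pos (phi_pos x)]
  have hexp : Real.exp (-x ^ 2 / 2) ≤ 1 := Real.exp_le_one_iff.2 (by nlinarith [sq_nonneg x])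
  have hsqrt : 1 ≤ Real.sqrt (2 * Real.pi) :=
    Real.one_le_sqrt.2 (by nlinarith [Real.pi_gt_three])
  exact div_le_one_of_le₀ (hexp.trans hsqrt) (by positivity)

lemma Phi_sub_Phi (a b : ℝ) : Phi b - Phi a = ∫ s in a..b, phi s := by
  rw [Phi, Phi, div_sub_div_same, intervalIntegral.integral_Iic_sub_Iic
    integrable_exp_neg_sq_div_two.integrableOn integrable_exp_neg_sq_div_two.integrableOn]
  exact (intervalIntegral.integral_div _ _).symm

lemma hasDerivAt_Phi (x : ℝ) : HasDerivAt Phi (phi x) x := by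
  have hint : HasDerivAt (fun y => Phi 0 + ∫ s in (0 : ℝ)..y, phi s) (phi x) x :=
    (intervalIntegral.integral_hasDerivAt_right (continuous_phi.intervalIntegrable _ _)
      continuous_phi.aestronglyMeasurable.stronglyMeasurableAtFilter
      continuous_phi.continuousAt).const_add _
  convert hint using 1
  funext y
  rw [← Phi_sub_Phi]
  ring

lemma Phi_strictMono : StrictMono Phi :=
  strictMono_of_deriv_pos fun x => (hasDerivAt_Phi x).deriv ▸ phi_pos x

lemma lipschitzWith_Phi : LipschitzWith 1 Phi :=
  lipschitzWith_of_nnnorm_deriv_le (fun x => (hasDerivAt_Phi x).differentiableAt) fun x => by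
    rw [(hasDerivAt_Phi x).deriv, ← NNReal.coe_le_coe, coe_nnnorm, Real.norm_eq_abs]
    exact abs_phi_le_one x

lemma abs_phi_mul_sub_phi_mul_le (x y a b : ℝ) : |phi x * b - phi y * a| ≤ |b| + |a| :=
  calc |phi x * b - phi y * a| ≤ |phi x| * |b| + |phi y| * |a| := by
        rw [← abs_mul, ← abs_mul]; exact abs_sub _ _
    _ ≤ 1 * |b| + 1 * |a| := by gcongr <;> exact abs_phi_le_one _
    _ = |b| + |a| := by ring

noncomputable def gExcess (ε ℓ u t : ℝ) : ℝ :=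
  Phi (u - t) - Phi (ℓ + t) - (1 - ε)

lemma continuous_gExcess (ε ℓ u : ℝ) : Continuous (gExcess ε ℓ u) := by
  have := lipschitzWith_Phi.continuous
  unfold gExcess; fun_prop

lemma gExcess_strictAnti (ε ℓ u : ℝ) : StrictAnti (gExcess ε ℓ u) := fun t t' htt' => by
  have hu := Phi_strictMono (show u - t' < u - t by linarith)
  have hℓ := Phi_strictMono (show ℓ + t < ℓ + t' by linarith)
  unfold gExcess; linarith

lemma gExcess_nonpos {ε ℓ u t : ℝ} (hε : ε ≤ 1) (ht : u - t ≤ ℓ + t) : gExcess ε ℓ u t ≤ 0 := by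
  have := Phi_strictMono.monotone ht
  unfold gExcess; linarith

lemma abs_gExcess_sub_le (ε ℓ u ℓ' u' t : ℝ) :
    |gExcess ε ℓ u t - gExcess ε ℓ' u' t| ≤ |u - u'| + |ℓ - ℓ'| := by
  have hu := lipschitzWith_Phi.dist_le_mul (u - t) (u' - t)
  have hℓ := lipschitzWith_Phi.dist_le_mul (ℓ + t) (ℓ' + t)
  simp only [Real.dist_eq, NNReal.coe_one, one_mul, sub_sub_sub_cancel_right,
    add_sub_add_right_eq_sub] at hu hℓ
  calc |gExcess ε ℓ u t - gExcess ε ℓ' u' t|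
      = |(Phi (u - t) - Phi (u' - t)) - (Phi (ℓ + t) - Phi (ℓ' + t))| := by
        unfold gExcess; ring_nf
    _ ≤ |u - u'| + |ℓ - ℓ'| := (abs_sub _ _).trans (add_le_add hu hℓ)

lemma g_eq_setIntegral_Ioc {ε ℓ u T : ℝ} (hε : ε ≤ 1) (hu : u ≤ T) (hℓ : -T ≤ ℓ) :
    g ε ℓ u = ∫ t in Ioc 0 T, max (gExcess ε ℓ u t) 0 := by
  refine setIntegral_eq_of_subset_of_forall_sdiff_eq_zero measurableSet_Ioi Ioc_subset_Ioi_self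
    fun t ⟨ht0, htT⟩ => max_eq_right (gExcess_nonpos hε ?_)
  have : T < t := lt_of_not_ge fun h => htT ⟨ht0, h⟩
  linarith

lemma HasDerivAt.max_zero {f : ℝ → ℝ} {f' x : ℝ} (hf : HasDerivAt f f' x) (hx : f x ≠ 0) :
    HasDerivAt (fun y => max (f y) 0) (if 0 < f x then f' else 0) x := by
  rcases hx.lt_or_gt with hneg | hpos
  · rw [if_neg hneg.not_gt]
    refine (hasDerivAt_const x 0).congr_of_eventuallyEq ?_
    filter_upwards [hf.continuousAt.eventually_lt_const hneg] with y hy using max_eq_right hy.le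
  · rw [if_pos hpos]
    refine hf.congr_of_eventuallyEq ?_
    filter_upwards [hf.continuousAt.eventually_const_lt hpos] with y hy using max_eq_left hy.le

section Parametric

variable {ε a b x₀ : ℝ} {ℓ u : ℝ → ℝ}

lemma hasDerivAt_gExcess_comp (hℓ : HasDerivAt ℓ a x₀) (hu : HasDerivAt u b x₀) (t : ℝ) :
    HasDerivAt (fun x => gExcess ε (ℓ x) (u x) t)
      (phi (u x₀ - t) * b - phi (ℓ x₀ + t) * a) x₀ :=
  (((hasDerivAt_Phi _).comp x₀ (hu.sub_const t)).sub
    ((hasDerivAt_Phi _).comp x₀ (hℓ.add_const t))).sub_const _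

lemma hasDerivAt_setIntegral_Ioc_max_gExcess {Kℓ Ku : NNReal} (hℓL : LipschitzWith Kℓ ℓ)
    (huL : LipschitzWith Ku u) (hℓ : HasDerivAt ℓ a x₀) (hu : HasDerivAt u b x₀) (T : ℝ) :
    HasDerivAt (fun x => ∫ t in Ioc 0 T, max (gExcess ε (ℓ x) (u x) t) 0)
      (∫ t in Ioc 0 T, if 0 < gExcess ε (ℓ x₀) (u x₀) t then
        phi (u x₀ - t) * b - phi (ℓ x₀ + t) * a else 0) x₀ := by
  have hfinite : IsFiniteMeasure (volume.restrict (Ioc (0 : ℝ) T)) := by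
    rw [isFiniteMeasure_restrict]; exact measure_Ioc_lt_top.ne
  have hmeas : ∀ x, AEStronglyMeasurable (fun t => max (gExcess ε (ℓ x) (u x) t) 0)
      (volume.restrict (Ioc 0 T)) := fun x =>
    ((continuous_gExcess _ _ _).max continuous_const).aestronglyMeasurable
  have hlip : ∀ t, LipschitzWith (Ku + Kℓ) fun x => max (gExcess ε (ℓ x) (u x) t) 0 := by
    refine fun t => LipschitzWith.of_dist_le_mul fun x y => ?_
    rw [Real.dist_eq, NNReal.coe_add, add_mul]
    refine (abs_max_sub_max_le_abs _ _ _).trans ((abs_gExcess_sub_le _ _ _ _ _ _).trans ?_)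
    exact add_le_add (huL.dist_le_mul x y) (hℓL.dist_le_mul x y)
  have hne_zero : ∀ᵐ t ∂volume.restrict (Ioc 0 T), gExcess ε (ℓ x₀) (u x₀) t ≠ 0 := by
    refine ae_restrict_of_ae (measure_eq_zero_iff_ae_notMem.1 (Subsingleton.measure_zero ?_ _))
    exact fun t (ht : _ = 0) s (hs : _ = 0) =>
      (gExcess_strictAnti _ _ _).injective (ht.trans hs.symm)
  refine (hasDerivAt_integral_of_dominated_loc_of_lip
    (bound := fun _ => ((Ku + Kℓ : NNReal) : ℝ)) Filter.univ_mem (.of_forall hmeas) ?_ ?_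
    (.of_forall fun t => ?_) (integrable_const _) ?_).2
  · exact ((continuous_gExcess _ _ _).max continuous_const).integrableOn_Icc.mono_set
      Ioc_subset_Icc_self
  · have := continuous_phi.measurable
    exact (Measurable.ite (measurableSet_lt measurable_const (continuous_gExcess _ _ _).measurable)
      (by fun_prop) measurable_const).aestronglyMeasurable
  · simpa only [Real.nnabs_coe] using (hlip t).lipschitzOnWith
  · filter_upwards [hne_zero] with t ht
    exact (hasDerivAt_gExcess_comp hℓ hu t).max_zero ht

end Parametric

lemma abs_lineMap_le_max {a b t : ℝ} (ht : t ∈ Icc 0 1) :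
    |AffineMap.lineMap a b t| ≤ max |a| |b| := by
  simpa only [Real.norm_eq_abs] using convexOn_univ_norm.le_max_of_mem_segment
    (mem_univ a) (mem_univ b) (lineMap_mem_segment ℝ a b ht)

lemma abs_setIntegral_Ioc_ite_le {p : ℝ → Prop} [DecidablePred p] {v w : ℝ → ℝ} {T : ℝ}
    (hT : 0 ≤ T) (a b : ℝ) :
    |∫ t in Ioc 0 T, if p t then phi (v t) * b - phi (w t) * a else 0| ≤ T * (|b| + |a|) := by
  have hbound : ∀ t ∈ Ioc 0 T,
      ‖if p t then phi (v t) * b - phi (w t) * a else 0‖ ≤ |b| + |a| := fun t _ => by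
    split_ifs
    · exact abs_phi_mul_sub_phi_mul_le _ _ _ _
    · simp only [norm_zero]; positivity
  have := norm_setIntegral_le_of_norm_le_const (μ := volume) measure_Ioc_lt_top hbound
  rwa [Real.volume_real_Ioc_of_le hT, sub_zero, mul_comm] at this

theorem stmt_8_general (ε : ℝ) (hε : ε ∈ Set.Ioo (0:ℝ) (1/2))
    (ℓ₁ u₁ ℓ₂ u₂ : ℝ) :
    let s : ℝ → ℝ := fun lam => g ε ((1 - lam) * ℓ₁ + lam * ℓ₂) ((1 - lam) * u₁ + lam * u₂)
    let M : ℝ := max (max |u₁| |u₂|) (max |ℓ₁| |ℓ₂|)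
    ∀ lam ∈ Set.Ioo (0:ℝ) 1, ∃ d : ℝ, HasDerivAt s d lam ∧
      |d| ≤ M * (|u₂ - u₁| + |ℓ₂ - ℓ₁|) := by
  intro s M lam hlam
  have hε1 : ε ≤ 1 := by linarith [hε.2]
  set ℓ := AffineMap.lineMap (k := ℝ) ℓ₁ ℓ₂
  set u := AffineMap.lineMap (k := ℝ) u₁ u₂
  have hs : s = fun y => g ε (ℓ y) (u y) := by
    simp only [s, ℓ, u, AffineMap.lineMap_apply_ring]
  have hloc : s =ᶠ[nhds lam] fun y => ∫ t in Ioc 0 M, max (gExcess ε (ℓ y) (u y) t) 0 := by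
    filter_upwards [Ioo_mem_nhds hlam.1 hlam.2] with y hy
    have hℓ : |ℓ y| ≤ M := (abs_lineMap_le_max (Ioo_subset_Icc_self hy)).trans (le_max_right _ _)
    have hu : |u y| ≤ M := (abs_lineMap_le_max (Ioo_subset_Icc_self hy)).trans (le_max_left _ _)
    rw [hs]
    exact g_eq_setIntegral_Ioc hε1 (abs_le.1 hu).2 (abs_le.1 hℓ).1
  refine ⟨_, (hasDerivAt_setIntegral_Ioc_max_gExcess (lipschitzWith_lineMap ℓ₁ ℓ₂)
    (lipschitzWith_lineMap u₁ u₂) AffineMap.hasDerivAt_lineMap AffineMap.hasDerivAt_lineMap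
    M).congr_of_eventuallyEq hloc, abs_setIntegral_Ioc_ite_le ?_ _ _⟩
  exact (abs_nonneg _).trans (le_max_left _ _ |>.trans (le_max_left _ _))

theorem stmt_8 (ε : ℝ) (hε : ε ∈ Set.Ioo (0:ℝ) (1/2))
    (ℓ₁ u₁ ℓ₂ u₂ : ℝ) (h₁ : ℓ₁ ≤ u₁) (h₂ : ℓ₂ ≤ u₂) :
    let s : ℝ → ℝ := fun lam => g ε ((1 - lam) * ℓ₁ + lam * ℓ₂) ((1 - lam) * u₁ + lam * u₂)
    let M : ℝ := max (max |u₁| |u₂|) (max |ℓ₁| |ℓ₂|)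
    ∀ lam ∈ Set.Ioo (0:ℝ) 1, ∃ d : ℝ, HasDerivAt s d lam ∧
      |d| ≤ M * (|u₂ - u₁| + |ℓ₂ - ℓ₁|) :=
  stmt_8_general ε hε ℓ₁ u₁ ℓ₂ u₂
end

section
/- Fix ε ∈ (0, 1/2). For each t ≥ 0 let f_t(ℓ, u) = max{Φ(u − t) − Φ(ℓ + t) − (1 − ε), 0}. Then the function (ℓ, u) ↦ √(g_ε(ℓ, u)) is concave on the convex set S = {(ℓ, u) : Φ(u) − Φ(ℓ) ≥ 1 − ε}, where g_ε(ℓ, u) = ∫₀^∞ f_t(ℓ, u) dt. -/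
open MeasureTheory Set

/-!
Write `h(t) = Φ(u - t) - Φ(ℓ + t) - (1 - ε)`, so that `g ε ℓ u = ∫₀^∞ h⁺`. Since
`1 - ε > 1/2 = Φ 0`, `h(t) ≥ 0` forces `u - t ≥ 0 ≥ ℓ + t`, where `Φ(u - t)` is concave and
`Φ(ℓ + t)` convex; so `h` is jointly concave in `(t, ℓ, u)` where it is nonnegative. As `h` is
antitone in `t`, the layer-cake formula gives `∫₀^∞ h⁺ = ∫₀^{h(0)} τ(s) ds`, with `τ(s)` the right
end of `{t ≥ 0 | h(t) ≥ s}`, and joint concavity makes `τ` superadditive along convex combinations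
of levels. Rescaling the levels to `[0, 1]` writes `gᵢ = Hᵢ Iᵢ` with `Hᵢ = hᵢ(0)` and
`Iᵢ = ∫₀¹ τᵢ(Hᵢ r) dr`; superadditivity of `τ` then gives `g ≥ (aH₁ + bH₂)(aI₁ + bI₂)` at the
convex combination, and Cauchy–Schwarz bounds this below by `(a√g₁ + b√g₂)²`.
-/

section Gaussian

lemma integral_exp_neg_sq_div_two : ∫ s : ℝ, Real.exp (-s ^ 2 / 2) = Real.sqrt (2 * Real.pi) := by
  simpa [neg_div, div_eq_inv_mul] using integral_gaussian (1 / 2)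

lemma Phi_hasDerivAt (x : ℝ) :
    HasDerivAt Phi (Real.exp (-x ^ 2 / 2) / Real.sqrt (2 * Real.pi)) x := by
  have hcont : Continuous fun s : ℝ => Real.exp (-s ^ 2 / 2) := by fun_prop
  have hPhi : Phi = fun y => ((∫ s in Iic 0, Real.exp (-s ^ 2 / 2)) +
      ∫ s in (0:ℝ)..y, Real.exp (-s ^ 2 / 2)) / Real.sqrt (2 * Real.pi) := by
    funext y
    rw [Phi, ← intervalIntegral.integral_Iic_sub_Iic integrable_exp_neg_sq_div_two.integrableOn
      integrable_exp_neg_sq_div_two.integrableOn, add_sub_cancel]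
  rw [hPhi]
  exact ((intervalIntegral.integral_hasDerivAt_right (hcont.intervalIntegrable _ _)
    (hcont.stronglyMeasurableAtFilter _ _) hcont.continuousAt).const_add _).div_const _

@[fun_prop]
lemma Phi_continuous : Continuous Phi :=
  continuous_iff_continuousAt.2 fun x => (Phi_hasDerivAt x).continuousAt

lemma Phi_monotone : Monotone Phi := fun _ _ hxy =>
  div_le_div_of_nonneg_right (setIntegral_mono_set integrable_exp_neg_sq_div_two.integrableOn
    (.of_forall fun _ => (Real.exp_pos _).le) (Iic_subset_Iic.2 hxy).eventuallyLE) (by positivity)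

lemma Phi_nonneg (x : ℝ) : 0 ≤ Phi x :=
  div_nonneg (setIntegral_nonneg measurableSet_Iic fun _ _ => (Real.exp_pos _).le) (by positivity)

lemma Phi_le_one (x : ℝ) : Phi x ≤ 1 := by
  rw [Phi, div_le_one (by positivity), ← integral_exp_neg_sq_div_two]
  exact setIntegral_le_integral integrable_exp_neg_sq_div_two
    (.of_forall fun _ => (Real.exp_pos _).le)

lemma Phi_zero : Phi 0 = 1 / 2 := by
  have hsymm :
      ∫ s in Iic (0:ℝ), Real.exp (-s ^ 2 / 2) = ∫ s in Ioi (0:ℝ), Real.exp (-s ^ 2 / 2) := by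
    have h := integral_comp_neg_Iic (0:ℝ) fun s => Real.exp (-s ^ 2 / 2)
    simp only [neg_sq, neg_zero] at h
    exact h
  have hsplit := intervalIntegral.integral_Iic_add_Ioi (b := 0)
    integrable_exp_neg_sq_div_two.integrableOn integrable_exp_neg_sq_div_two.integrableOn
  rw [integral_exp_neg_sq_div_two] at hsplit
  rw [Phi, div_eq_iff (by positivity)]
  linarith

lemma Phi_concaveOn_Ici : ConcaveOn ℝ (Ici 0) Phi := by
  refine AntitoneOn.concaveOn_of_deriv (convex_Ici 0) Phi_continuous.continuousOn
    (fun x _ => (Phi_hasDerivAt x).differentiableAt.differentiableWithinAt) ?_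
  rw [interior_Ici]
  intro x (hx : 0 < x) y _ hxy
  rw [(Phi_hasDerivAt x).deriv, (Phi_hasDerivAt y).deriv]
  gcongr

lemma Phi_convexOn_Iic : ConvexOn ℝ (Iic 0) Phi := by
  refine MonotoneOn.convexOn_of_deriv (convex_Iic 0) Phi_continuous.continuousOn
    (fun x _ => (Phi_hasDerivAt x).differentiableAt.differentiableWithinAt) ?_
  rw [interior_Iic]
  intro x _ y (hy : y < 0) hxy
  rw [(Phi_hasDerivAt x).deriv, (Phi_hasDerivAt y).deriv]
  exact div_le_div_of_nonneg_right (Real.exp_le_exp.2 (by nlinarith)) (by positivity)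

end Gaussian

noncomputable def superlevelEnd (φ : ℝ → ℝ) (s : ℝ) : ℝ :=
  sSup {t | 0 ≤ t ∧ s ≤ φ t}

section SuperlevelEnd

variable {φ : ℝ → ℝ} {s t T : ℝ}

lemma bddAbove_superlevel (hφ : Antitone φ) (hT : φ T < 0) (hs : 0 ≤ s) :
    BddAbove {t | 0 ≤ t ∧ s ≤ φ t} :=
  ⟨T, fun _ ht => le_of_lt <| not_le.1 fun hTt => (hT.trans_le hs).not_ge <| ht.2.trans (hφ hTt)⟩

lemma superlevelEnd_nonneg (φ : ℝ → ℝ) (s : ℝ) : 0 ≤ superlevelEnd φ s :=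
  Real.sSup_nonneg fun _ ht => ht.1

lemma le_superlevelEnd (hφ : Antitone φ) (hT : φ T < 0) (hs : 0 ≤ s) (ht : 0 ≤ t)
    (hst : s ≤ φ t) : t ≤ superlevelEnd φ s :=
  le_csSup (bddAbove_superlevel hφ hT hs) ⟨ht, hst⟩

lemma le_apply_superlevelEnd (hφ : Antitone φ) (hφc : Continuous φ) (hT : φ T < 0)
    (hs : 0 ≤ s) (hs0 : s ≤ φ 0) : s ≤ φ (superlevelEnd φ s) :=
  (IsClosed.csSup_mem (isClosed_le continuous_const continuous_id |>.inter
    (isClosed_le continuous_const hφc)) ⟨0, le_rfl, hs0⟩ (bddAbove_superlevel hφ hT hs)).2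

lemma antitoneOn_superlevelEnd (hφ : Antitone φ) (hT : φ T < 0) :
    AntitoneOn (superlevelEnd φ) (Ici 0) := by
  intro s hs s' _ hss'
  rcases eq_empty_or_nonempty {t | 0 ≤ t ∧ s' ≤ φ t} with h | h
  · rw [superlevelEnd, h, Real.sSup_empty]
    exact superlevelEnd_nonneg φ s
  · exact csSup_le_csSup (bddAbove_superlevel hφ hT hs) h fun t ht => ⟨ht.1, hss'.trans ht.2⟩

lemma intervalIntegrable_superlevelEnd_comp_mul (hφ : Antitone φ) (hT : φ T < 0) {H : ℝ}
    (hH : 0 ≤ H) : IntervalIntegrable (fun r => superlevelEnd φ (H * r)) volume 0 1 := by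
  refine AntitoneOn.intervalIntegrable fun r hr r' hr' hrr' => ?_
  rw [uIcc_of_le zero_le_one] at hr hr'
  exact antitoneOn_superlevelEnd hφ hT (mul_nonneg hH hr.1) (mul_nonneg hH hr'.1)
    (mul_le_mul_of_nonneg_left hrr' hH)

lemma superlevel_inter_Ioi_eq_Ioc (hφ : Antitone φ) (hφc : Continuous φ) (hT : φ T < 0)
    (hs : 0 < s) (hs0 : s ≤ φ 0) :
    {t | s ≤ max (φ t) 0} ∩ Ioi 0 = Ioc 0 (superlevelEnd φ s) := by
  ext t
  simp only [mem_inter_iff, mem_ofPred_eq, mem_Ioi, mem_Ioc, le_max_iff, not_le.2 hs, or_false]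
  refine ⟨fun ⟨hst, ht⟩ => ⟨ht, le_superlevelEnd hφ hT hs.le ht.le hst⟩,
    fun ⟨ht, hts⟩ => ⟨(le_apply_superlevelEnd hφ hφc hT hs.le hs0).trans (hφ hts), ht⟩⟩

lemma integrableOn_Ioi_max_zero (hφ : Antitone φ) (hφc : Continuous φ) (hT : φ T < 0) :
    IntegrableOn (fun t => max (φ t) 0) (Ioi 0) := by
  refine ((hφc.max continuous_const).continuousOn.integrableOn_Icc (a := 0) (b := T))
    |>.of_forall_sdiff_eq_zero measurableSet_Ioi fun t ⟨ht, htT⟩ => max_eq_right ?_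
  have hTt : T ≤ t := le_of_lt <| not_le.1 fun h => htT ⟨le_of_lt ht, h⟩
  exact ((hφ hTt).trans hT.le)

lemma integral_Ioi_max_zero_eq (hφ : Antitone φ) (hφc : Continuous φ) (hT : φ T < 0)
    (h0 : 0 ≤ φ 0) :
    ∫ t in Ioi 0, max (φ t) 0 = ∫ s in (0)..φ 0, superlevelEnd φ s := by
  rw [(integrableOn_Ioi_max_zero hφ hφc hT).integral_eq_integral_Ioc_meas_le
      (.of_forall fun _ => le_max_right _ _)
      ((ae_restrict_iff' measurableSet_Ioi).2
        (.of_forall fun t ht => max_le (hφ (le_of_lt ht)) h0)),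
    intervalIntegral.integral_of_le h0]
  refine setIntegral_congr_fun measurableSet_Ioc fun s ⟨hs, hs0⟩ => ?_
  rw [measureReal_restrict_apply' measurableSet_Ioi, superlevel_inter_Ioi_eq_Ioc hφ hφc hT hs hs0,
    Real.volume_real_Ioc_of_le (superlevelEnd_nonneg φ s), sub_zero]

lemma integral_superlevelEnd_le {H : ℝ} (hφ : Antitone φ) (hφc : Continuous φ) (hT : φ T < 0)
    (hH : 0 ≤ H) (hH0 : H ≤ φ 0) :
    ∫ s in (0)..H, superlevelEnd φ s ≤ ∫ t in Ioi 0, max (φ t) 0 := by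
  rw [integral_Ioi_max_zero_eq hφ hφc hT (hH.trans hH0)]
  exact intervalIntegral.integral_mono_interval le_rfl hH hH0
    (.of_forall fun _ => superlevelEnd_nonneg _ _)
    ((antitoneOn_superlevelEnd hφ hT).mono (uIcc_of_le (hH.trans hH0) ▸ Icc_subset_Ici_self)
      |>.intervalIntegrable)

end SuperlevelEnd

lemma add_mul_superlevelEnd_le {φ₁ φ₂ φ : ℝ → ℝ} {T₁ T₂ T a b s₁ s₂ : ℝ}
    (hφ₁ : Antitone φ₁) (hφ₂ : Antitone φ₂) (hφ : Antitone φ)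
    (hφ₁c : Continuous φ₁) (hφ₂c : Continuous φ₂)
    (hT₁ : φ₁ T₁ < 0) (hT₂ : φ₂ T₂ < 0) (hT : φ T < 0) (ha : 0 ≤ a) (hb : 0 ≤ b)
    (hcomb : ∀ t₁ t₂, 0 ≤ t₁ → 0 ≤ t₂ → 0 ≤ φ₁ t₁ → 0 ≤ φ₂ t₂ →
      a * φ₁ t₁ + b * φ₂ t₂ ≤ φ (a * t₁ + b * t₂))
    (hs₁ : 0 ≤ s₁) (hs₁0 : s₁ ≤ φ₁ 0) (hs₂ : 0 ≤ s₂) (hs₂0 : s₂ ≤ φ₂ 0) :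
    a * superlevelEnd φ₁ s₁ + b * superlevelEnd φ₂ s₂ ≤ superlevelEnd φ (a * s₁ + b * s₂) := by
  have hτ₁ := le_apply_superlevelEnd hφ₁ hφ₁c hT₁ hs₁ hs₁0
  have hτ₂ := le_apply_superlevelEnd hφ₂ hφ₂c hT₂ hs₂ hs₂0
  refine le_superlevelEnd hφ hT (by positivity) (add_nonneg
    (mul_nonneg ha (superlevelEnd_nonneg _ _)) (mul_nonneg hb (superlevelEnd_nonneg _ _))) ?_
  calc a * s₁ + b * s₂ ≤ a * φ₁ (superlevelEnd φ₁ s₁) + b * φ₂ (superlevelEnd φ₂ s₂) := by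
        gcongr
    _ ≤ _ := hcomb _ _ (superlevelEnd_nonneg _ _) (superlevelEnd_nonneg _ _)
        (hs₁.trans hτ₁) (hs₂.trans hτ₂)

lemma mul_sqrt_mul_add_mul_sqrt_mul_le {a b x₁ x₂ y₁ y₂ : ℝ} (ha : 0 ≤ a) (hb : 0 ≤ b)
    (hx₁ : 0 ≤ x₁) (hx₂ : 0 ≤ x₂) (hy₁ : 0 ≤ y₁) (hy₂ : 0 ≤ y₂) :
    a * √(x₁ * y₁) + b * √(x₂ * y₂) ≤ √((a * x₁ + b * x₂) * (a * y₁ + b * y₂)) := by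
  rw [Real.sqrt_mul hx₁, Real.sqrt_mul hx₂]
  refine Real.le_sqrt_of_sq_le ?_
  have key : (a * x₁ + b * x₂) * (a * y₁ + b * y₂) - (a * (√x₁ * √y₁) + b * (√x₂ * √y₂)) ^ 2
      = a * b * (√x₁ * √y₂ - √x₂ * √y₁) ^ 2 := by
    nth_rw 1 [← Real.sq_sqrt hx₁, ← Real.sq_sqrt hx₂, ← Real.sq_sqrt hy₁, ← Real.sq_sqrt hy₂]
    ring
  linarith [mul_nonneg (mul_nonneg ha hb) (sq_nonneg (√x₁ * √y₂ - √x₂ * √y₁))]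

/-- A one-dimensional Borell–Brascamp–Lieb inequality for antitone profiles on `[0, ∞)`. -/
theorem mul_sqrt_integral_add_mul_sqrt_integral_le {φ₁ φ₂ φ : ℝ → ℝ} {T₁ T₂ T a b : ℝ}
    (hφ₁ : Antitone φ₁) (hφ₂ : Antitone φ₂) (hφ : Antitone φ)
    (hφ₁c : Continuous φ₁) (hφ₂c : Continuous φ₂) (hφc : Continuous φ)
    (hT₁ : φ₁ T₁ < 0) (hT₂ : φ₂ T₂ < 0) (hT : φ T < 0) (h₁ : 0 ≤ φ₁ 0) (h₂ : 0 ≤ φ₂ 0)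
    (ha : 0 ≤ a) (hb : 0 ≤ b)
    (hcomb : ∀ t₁ t₂, 0 ≤ t₁ → 0 ≤ t₂ → 0 ≤ φ₁ t₁ → 0 ≤ φ₂ t₂ →
      a * φ₁ t₁ + b * φ₂ t₂ ≤ φ (a * t₁ + b * t₂)) :
    a * √(∫ t in Ioi 0, max (φ₁ t) 0) + b * √(∫ t in Ioi 0, max (φ₂ t) 0)
      ≤ √(∫ t in Ioi 0, max (φ t) 0) := by
  set H := a * φ₁ 0 + b * φ₂ 0
  have hH : 0 ≤ H := by positivity
  have hH0 : H ≤ φ 0 := by simpa using hcomb 0 0 le_rfl le_rfl h₁ h₂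
  have hscale (ψ : ℝ → ℝ) (c : ℝ) :
      ∫ s in (0)..c, superlevelEnd ψ s = c * ∫ r in (0)..1, superlevelEnd ψ (c * r) := by
    rw [intervalIntegral.mul_integral_comp_mul_left, mul_zero, mul_one]
  set I₁ := ∫ r in (0)..1, superlevelEnd φ₁ (φ₁ 0 * r)
  set I₂ := ∫ r in (0)..1, superlevelEnd φ₂ (φ₂ 0 * r)
  have hI₁ : 0 ≤ I₁ :=
    intervalIntegral.integral_nonneg zero_le_one fun _ _ => superlevelEnd_nonneg _ _
  have hI₂ : 0 ≤ I₂ :=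
    intervalIntegral.integral_nonneg zero_le_one fun _ _ => superlevelEnd_nonneg _ _
  have hlevel : ∀ r ∈ Icc (0:ℝ) 1,
      a * superlevelEnd φ₁ (φ₁ 0 * r) + b * superlevelEnd φ₂ (φ₂ 0 * r)
        ≤ superlevelEnd φ (H * r) := by
    rintro r ⟨hr0, hr1⟩
    rw [show H * r = a * (φ₁ 0 * r) + b * (φ₂ 0 * r) by ring]
    exact add_mul_superlevelEnd_le hφ₁ hφ₂ hφ hφ₁c hφ₂c hT₁ hT₂ hT ha hb hcomb
      (mul_nonneg h₁ hr0) (mul_le_of_le_one_right h₁ hr1)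
      (mul_nonneg h₂ hr0) (mul_le_of_le_one_right h₂ hr1)
  have hmix : H * (a * I₁ + b * I₂) ≤ ∫ t in Ioi 0, max (φ t) 0 := by
    have hint₁ := intervalIntegrable_superlevelEnd_comp_mul hφ₁ hT₁ h₁
    have hint₂ := intervalIntegrable_superlevelEnd_comp_mul hφ₂ hT₂ h₂
    calc H * (a * I₁ + b * I₂)
        = H * ∫ r in (0)..1,
            (a * superlevelEnd φ₁ (φ₁ 0 * r) + b * superlevelEnd φ₂ (φ₂ 0 * r)) := by
          rw [intervalIntegral.integral_add (hint₁.const_mul a) (hint₂.const_mul b),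
            intervalIntegral.integral_const_mul, intervalIntegral.integral_const_mul]
      _ ≤ H * ∫ r in (0)..1, superlevelEnd φ (H * r) :=
          mul_le_mul_of_nonneg_left (intervalIntegral.integral_mono_on zero_le_one
            ((hint₁.const_mul a).add (hint₂.const_mul b))
            (intervalIntegrable_superlevelEnd_comp_mul hφ hT hH) hlevel) hH
      _ = ∫ s in (0)..H, superlevelEnd φ s := (hscale φ H).symm
      _ ≤ ∫ t in Ioi 0, max (φ t) 0 := integral_superlevelEnd_le hφ hφc hT hH hH0
  rw [integral_Ioi_max_zero_eq hφ₁ hφ₁c hT₁ h₁, integral_Ioi_max_zero_eq hφ₂ hφ₂c hT₂ h₂,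
    hscale, hscale]
  exact (mul_sqrt_mul_add_mul_sqrt_mul_le ha hb h₁ h₂ hI₁ hI₂).trans (Real.sqrt_le_sqrt hmix)

noncomputable def chanceSlack (ε ℓ u t : ℝ) : ℝ := Phi (u - t) - Phi (ℓ + t) - (1 - ε)

section ChanceSlack

variable {ε ℓ u t : ℝ}

lemma antitone_chanceSlack (ε ℓ u : ℝ) : Antitone (chanceSlack ε ℓ u) := fun t t' htt' => by
  have h₁ := Phi_monotone (show u - t' ≤ u - t by linarith)
  have h₂ := Phi_monotone (show ℓ + t ≤ ℓ + t' by linarith)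
  simp only [chanceSlack]
  linarith

lemma continuous_chanceSlack (ε ℓ u : ℝ) : Continuous (chanceSlack ε ℓ u) := by
  unfold chanceSlack
  fun_prop

lemma chanceSlack_abs_add_abs_neg (hε : ε < 1) : chanceSlack ε ℓ u (|ℓ| + |u|) < 0 := by
  have h₁ := Phi_monotone (show u - (|ℓ| + |u|) ≤ 0 by linarith [le_abs_self u, abs_nonneg ℓ])
  have h₂ := Phi_monotone (show 0 ≤ ℓ + (|ℓ| + |u|) by linarith [neg_abs_le ℓ, abs_nonneg u])
  simp only [chanceSlack]
  linarith

lemma chanceSlack_zero_nonneg_iff : 0 ≤ chanceSlack ε ℓ u 0 ↔ 1 - ε ≤ Phi u - Phi ℓ := by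
  simp [chanceSlack]

lemma nonneg_sub_and_add_nonpos_of_chanceSlack_nonneg (hε : ε < 1 / 2)
    (h : 0 ≤ chanceSlack ε ℓ u t) : 0 ≤ u - t ∧ ℓ + t ≤ 0 := by
  have h₁ := Phi_le_one (u - t)
  have h₂ := Phi_nonneg (ℓ + t)
  simp only [chanceSlack] at h
  exact ⟨(Phi_monotone.reflect_lt (by linarith [Phi_zero])).le,
    (Phi_monotone.reflect_lt (by linarith [Phi_zero])).le⟩

lemma mul_chanceSlack_add_mul_chanceSlack_le (hε : ε < 1 / 2) {ℓ₁ u₁ ℓ₂ u₂ t₁ t₂ a b : ℝ}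
    (ha : 0 ≤ a) (hb : 0 ≤ b) (hab : a + b = 1)
    (h₁ : 0 ≤ chanceSlack ε ℓ₁ u₁ t₁) (h₂ : 0 ≤ chanceSlack ε ℓ₂ u₂ t₂) :
    a * chanceSlack ε ℓ₁ u₁ t₁ + b * chanceSlack ε ℓ₂ u₂ t₂
      ≤ chanceSlack ε (a * ℓ₁ + b * ℓ₂) (a * u₁ + b * u₂) (a * t₁ + b * t₂) := by
  obtain ⟨hu₁, hℓ₁⟩ := nonneg_sub_and_add_nonpos_of_chanceSlack_nonneg hε h₁
  obtain ⟨hu₂, hℓ₂⟩ := nonneg_sub_and_add_nonpos_of_chanceSlack_nonneg hε h₂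
  have hu := Phi_concaveOn_Ici.2 hu₁ hu₂ ha hb hab
  have hℓ := Phi_convexOn_Iic.2 hℓ₁ hℓ₂ ha hb hab
  simp only [smul_eq_mul] at hu hℓ
  have eu : a * (u₁ - t₁) + b * (u₂ - t₂) = a * u₁ + b * u₂ - (a * t₁ + b * t₂) := by ring
  have eℓ : a * (ℓ₁ + t₁) + b * (ℓ₂ + t₂) = a * ℓ₁ + b * ℓ₂ + (a * t₁ + b * t₂) := by ring
  rw [eu] at hu
  rw [eℓ] at hℓ
  simp only [chanceSlack]
  linear_combination hu + hℓ - (1 - ε) * hab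

lemma convex_chanceConstraint (hε : ε < 1 / 2) :
    Convex ℝ {p : ℝ × ℝ | 1 - ε ≤ Phi p.2 - Phi p.1} := by
  rintro ⟨ℓ₁, u₁⟩ h₁ ⟨ℓ₂, u₂⟩ h₂ a b ha hb hab
  replace h₁ := chanceSlack_zero_nonneg_iff.2 h₁
  replace h₂ := chanceSlack_zero_nonneg_iff.2 h₂
  have := mul_chanceSlack_add_mul_chanceSlack_le hε ha hb hab h₁ h₂
  rw [mul_zero, mul_zero, add_zero] at this
  exact chanceSlack_zero_nonneg_iff.1 <|
    (add_nonneg (mul_nonneg ha h₁) (mul_nonneg hb h₂)).trans this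

end ChanceSlack

theorem stmt_9 (ε : ℝ) (hε : ε ∈ Set.Ioo (0:ℝ) (1/2)) :
    ConcaveOn ℝ {p : ℝ × ℝ | 1 - ε ≤ Phi p.2 - Phi p.1}
      (fun p : ℝ × ℝ => Real.sqrt (g ε p.1 p.2)) := by
  have hε₁ : ε < 1 := by linarith [hε.2]
  refine ⟨convex_chanceConstraint hε.2, ?_⟩
  rintro ⟨ℓ₁, u₁⟩ h₁ ⟨ℓ₂, u₂⟩ h₂ a b ha hb hab
  exact mul_sqrt_integral_add_mul_sqrt_integral_le
    (antitone_chanceSlack ..) (antitone_chanceSlack ..) (antitone_chanceSlack ..)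
    (continuous_chanceSlack ..) (continuous_chanceSlack ..) (continuous_chanceSlack ..)
    (chanceSlack_abs_add_abs_neg hε₁) (chanceSlack_abs_add_abs_neg hε₁)
    (chanceSlack_abs_add_abs_neg hε₁)
    (chanceSlack_zero_nonneg_iff.2 h₁) (chanceSlack_zero_nonneg_iff.2 h₂) ha hb
    fun _ _ _ _ => mul_chanceSlack_add_mul_chanceSlack_le hε.2 ha hb hab
end
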